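/- Let ψ: ℝ^d → ℝ be defined as ψ = ((2πb)^{2r} − (−1)^r ∑_{s=1}^d ∂^{2r}/∂x_s^{2r}) applied to the d-fold tensor product of φ*φ, where φ(x) = (1−(2x/h)^2)^r on |x| < h/2 and 0 otherwise. Then ψ(0) = ((h√π (2r)!)/(2Γ(2r+3/2)))^d (2πb)^{2r} − ((h√π (2r)!)/(2Γ(2r+3/2)))^{d−1} · d·4^{2r}(r!)^2/((2r+1)h^{2r−1}). -/

import Mathlib

/-!
Write `φ` as the cut-off to `[-h/2, h/2]` of the even polynomial `P(x) = (1 - (2x/h)²)^r`, which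
vanishes to order `r` at `±h/2`. The cut-offs of `P, P', …, P^(r-1)` are therefore Lipschitz, and
differentiating under the integral moves `r` derivatives onto each factor of `g = φ ⋆ φ`. At `0`,
parity and `r` integrations by parts give `g^(2r)(0) = ∫ P P^(2r)`, where `P^(2r)` is the constant
`(-4/h²)^r (2r)!`, while `g(0) = ∫ P²`. Both reduce to `∫_{-1}^{1} (1 - x²)^n = √π n! / Γ(n + 3/2)`.
-/

open MeasureTheory Real Set Polynomial
open scoped Convolution NNReal
open ContinuousLinearMap (mul)

theorem integral_one_sub_sq_pow_succ (n : ℕ) :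
    ∫ x in (-1 : ℝ)..1, (1 - x ^ 2) ^ (n + 1) =
      (2 * n + 2 : ℝ) / (2 * n + 3) * ∫ x in (-1 : ℝ)..1, (1 - x ^ 2) ^ n := by
  set I : ℕ → ℝ := fun m => ∫ x in (-1 : ℝ)..1, (1 - x ^ 2) ^ m
  have hint : ∀ m : ℕ, IntervalIntegrable (fun x : ℝ => (1 - x ^ 2) ^ m) volume (-1) 1 :=
    fun m => (by fun_prop : Continuous fun x : ℝ => (1 - x ^ 2) ^ m).intervalIntegrable _ _
  -- integrate `x ↦ x` against `d/dx (1 - x²)^(n+1) = -2(n+1) x (1 - x²)^n` by parts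
  have hparts : ∫ x in (-1 : ℝ)..1, x * (-(2 * (n + 1) * x * (1 - x ^ 2) ^ n))
      = -∫ x in (-1 : ℝ)..1, 1 * (1 - x ^ 2) ^ (n + 1) := by
    rw [intervalIntegral.integral_mul_deriv_eq_deriv_mul (u := fun x => x) (u' := fun _ => 1)
      (v := fun x => (1 - x ^ 2) ^ (n + 1)) (fun x _ => hasDerivAt_id x) (fun x _ => ?_)
      (by simp) (Continuous.intervalIntegrable (by fun_prop) _ _)]
    · norm_num
    · convert ((hasDerivAt_pow 2 x).const_sub 1).fun_pow (n + 1) using 1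
      push_cast; ring
  have hsplit : ∫ x in (-1 : ℝ)..1, x * (-(2 * (n + 1) * x * (1 - x ^ 2) ^ n))
      = 2 * (n + 1) * (I (n + 1) - I n) := by
    rw [← intervalIntegral.integral_sub (hint _) (hint _), ← intervalIntegral.integral_const_mul]
    congr 1; ext x; ring
  simp only [one_mul] at hparts
  rw [hsplit] at hparts
  field_simp
  linarith

theorem integral_one_sub_sq_pow (n : ℕ) :
    ∫ x in (-1 : ℝ)..1, (1 - x ^ 2) ^ n =
      2 ^ (2 * n + 1) * (n.factorial : ℝ) ^ 2 / (2 * n + 1).factorial := by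
  induction n with
  | zero => norm_num
  | succ n ih =>
    rw [integral_one_sub_sq_pow_succ, ih, show 2 * (n + 1) + 1 = 2 * n + 1 + 1 + 1 by ring]
    simp only [Nat.factorial_succ]
    push_cast
    field_simp
    ring

theorem Real.Gamma_nat_add_three_halves (n : ℕ) :
    Gamma (n + 3 / 2) = √π * (2 * n + 1).factorial / (2 ^ (2 * n + 1) * n.factorial) := by
  induction n with
  | zero =>
    rw [show ((0 : ℕ) : ℝ) + 3 / 2 = 1 / 2 + 1 by norm_num, Gamma_add_one (by norm_num),
      Gamma_one_half_eq]
    norm_num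
    ring
  | succ n ih =>
    rw [show ((n + 1 : ℕ) : ℝ) + 3 / 2 = (n + 3 / 2) + 1 by push_cast; ring,
      Gamma_add_one (by positivity), ih, show 2 * (n + 1) + 1 = 2 * n + 1 + 1 + 1 by ring]
    simp only [Nat.factorial_succ]
    push_cast
    field_simp
    ring

theorem integral_one_sub_sq_pow_eq_Gamma (n : ℕ) :
    ∫ x in (-1 : ℝ)..1, (1 - x ^ 2) ^ n = √π * n.factorial / Gamma (n + 3 / 2) := by
  rw [integral_one_sub_sq_pow, Gamma_nat_add_three_halves]
  field_simp

namespace Polynomial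

theorem eval_iterate_derivative_eq_zero_of_pow_dvd {R : Type*} [CommRing R] {p : R[X]} {t : R}
    {n k : ℕ} (hp : (X - C t) ^ n ∣ p) (hk : k < n) : (derivative^[k] p).eval t = 0 :=
  dvd_iff_isRoot.mp <| (dvd_pow_self _ (Nat.sub_ne_zero_of_lt hk)).trans
    (pow_sub_dvd_iterate_derivative_of_pow_dvd k hp)

theorem iterate_derivative_comp_neg_X {R : Type*} [CommRing R] (p : R[X]) (k : ℕ) :
    derivative^[k] (p.comp (-X)) = (-1) ^ k * (derivative^[k] p).comp (-X) := by
  induction k with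
  | zero => simp
  | succ k ih =>
    rw [Function.iterate_succ_apply', ih, Function.iterate_succ_apply', derivative_mul,
      derivative_comp]
    simp only [derivative_neg, derivative_X, derivative_pow, derivative_one]
    ring

theorem eval_neg_iterate_derivative_of_comp_neg_X {R : Type*} [CommRing R] {p : R[X]}
    (hp : p.comp (-X) = p) (k : ℕ) (x : R) :
    (derivative^[k] p).eval (-x) = (-1) ^ k * (derivative^[k] p).eval x := by
  have := congrArg (eval (-x)) (iterate_derivative_comp_neg_X p k)
  rwa [hp, eval_mul, eval_comp, eval_neg, eval_X, neg_neg, eval_pow, eval_neg, eval_one]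
    at this

theorem Monic.iterate_derivative_natDegree {R : Type*} [CommRing R] {p : R[X]} (hp : p.Monic) :
    derivative^[p.natDegree] p = C (p.natDegree.factorial : R) := by
  rw [eq_C_of_natDegree_le_zero (natDegree_iterate_derivative p p.natDegree |>.trans
    (Nat.sub_self _).le), coeff_iterate_derivative, zero_add, hp.coeff_natDegree,
    Nat.descFactorial_self, nsmul_one]

theorem integral_eval_derivative_mul {p q : ℝ[X]} {a b : ℝ} (ha : p.eval a = 0)
    (hb : p.eval b = 0) :
    ∫ x in a..b, (derivative p).eval x * q.eval x =
      -∫ x in a..b, p.eval x * (derivative q).eval x := by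
  have h := intervalIntegral.integral_deriv_mul_eq_sub (fun x _ => p.hasDerivAt x)
    (fun x _ => q.hasDerivAt x) (p.derivative.continuous.intervalIntegrable a b)
    (q.derivative.continuous.intervalIntegrable a b)
  rw [ha, hb, zero_mul, zero_mul, sub_zero, intervalIntegral.integral_add
    (Continuous.intervalIntegrable (by fun_prop) _ _)
    (Continuous.intervalIntegrable (by fun_prop) _ _)] at h
  linarith

theorem integral_eval_iterate_derivative_mul {p : ℝ[X]} {a b : ℝ} {n : ℕ}
    (ha : (X - C a) ^ n ∣ p) (hb : (X - C b) ^ n ∣ p) (q : ℝ[X]) :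
    ∫ x in a..b, (derivative^[n] p).eval x * q.eval x =
      (-1) ^ n * ∫ x in a..b, p.eval x * (derivative^[n] q).eval x := by
  induction n generalizing p q with
  | zero => simp
  | succ n ih =>
    have hroot : ∀ {t : ℝ}, (X - C t) ^ (n + 1) ∣ p → p.eval t = 0 := fun ht =>
      eval_iterate_derivative_eq_zero_of_pow_dvd (k := 0) ht n.succ_pos
    have hdvd : ∀ {t : ℝ}, (X - C t) ^ (n + 1) ∣ p → (X - C t) ^ n ∣ derivative p :=
      fun ht => by simpa using pow_sub_one_dvd_derivative_of_pow_dvd ht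
    rw [Function.iterate_succ_apply, ih (hdvd ha) (hdvd hb),
      integral_eval_derivative_mul (hroot ha) (hroot hb), Function.iterate_succ_apply']
    ring

end Polynomial

theorem lipschitzWith_indicator_Icc {f : ℝ → ℝ} {a b : ℝ} {K : ℝ≥0} (hab : a ≤ b)
    (hf : LipschitzOnWith K f (Icc a b)) (ha : f a = 0) (hb : f b = 0) :
    LipschitzWith K ((Icc a b).indicator f) := by
  have hext : (Icc a b).indicator f = IccExtend hab ((Icc a b).domRestrict f) := by
    ext x
    rcases lt_or_ge x a with hxa | hxa
    · rw [indicator_of_notMem (fun h => hxa.not_ge h.1), IccExtend_of_le_left _ _ hxa.le]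
      exact ha.symm
    rcases le_or_gt x b with hxb | hxb
    · rw [indicator_of_mem (mem_Icc.2 ⟨hxa, hxb⟩), IccExtend_of_mem _ _ (mem_Icc.2 ⟨hxa, hxb⟩)]
      rfl
    · rw [indicator_of_notMem (fun h => hxb.not_ge h.2), IccExtend_of_right_le _ _ hxb.le]
      exact hb.symm
  rw [hext, ← mul_one K]
  exact hf.to_restrict.comp (LipschitzWith.projIcc hab)

theorem hasDerivAt_indicator_Icc {f f' : ℝ → ℝ} {a b x : ℝ} (hf : ∀ y, HasDerivAt f (f' y) y)
    (ha : x ≠ a) (hb : x ≠ b) :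
    HasDerivAt ((Icc a b).indicator f) ((Icc a b).indicator f' x) x := by
  by_cases hx : x ∈ Icc a b
  · have hx' : x ∈ Ioo a b := ⟨lt_of_le_of_ne hx.1 ha.symm, lt_of_le_of_ne hx.2 hb⟩
    rw [indicator_of_mem hx]
    refine (hf x).congr_of_eventuallyEq ?_
    filter_upwards [isOpen_Ioo.mem_nhds hx'] with y hy
    exact indicator_of_mem (Ioo_subset_Icc_self hy) f
  · rw [indicator_of_notMem hx]
    refine (hasDerivAt_const x 0).congr_of_eventuallyEq ?_
    filter_upwards [isClosed_Icc.isOpen_compl.mem_nhds hx] with y hy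
    exact indicator_of_notMem hy f

theorem hasDerivAt_convolution_of_lipschitzWith {u v v' : ℝ → ℝ} {K : ℝ≥0} {C : ℝ}
    (hu : Integrable u) (hv : LipschitzWith K v) (hv_bdd : ∀ x, ‖v x‖ ≤ C)
    (hv'_meas : AEStronglyMeasurable v') (hv' : ∀ᵐ x, HasDerivAt v (v' x) x) (x₀ : ℝ) :
    HasDerivAt (u ⋆[mul ℝ ℝ] v) ((u ⋆[mul ℝ ℝ] v') x₀) x₀ := by
  have hsub := quasiMeasurePreserving_sub_left (volume : Measure ℝ) x₀
  have hv_meas : ∀ x, AEStronglyMeasurable (fun y => v (x - y)) :=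
    fun x => (hv.continuous.comp (continuous_sub_left x)).aestronglyMeasurable
  refine (hasDerivAt_integral_of_dominated_loc_of_lip (F := fun x y => u y * v (x - y))
    (bound := fun y => ‖u y‖ * K) Filter.univ_mem (.of_forall fun x => hu.1.mul (hv_meas x))
    (hu.mul_bdd (hv_meas x₀) (.of_forall fun y => hv_bdd _))
    (hu.1.mul (hv'_meas.comp_quasiMeasurePreserving hsub)) (.of_forall fun y => ?_)
    (hu.norm.mul_const _) ?_).2
  · have h : LipschitzWith (‖u y‖₊ * K) (fun x => u y * v (x - y)) := by
      simpa [Function.comp_def, sub_eq_add_neg] using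
        (lipschitzWith_smul (u y)).comp (hv.comp (isometry_add_right (-y)).lipschitz)
    have hK : nnabs (‖u y‖ * K) = ‖u y‖₊ * K := by ext; simp
    exact hK ▸ h.lipschitzOnWith
  · filter_upwards [hsub.ae hv'] with y hy
    simpa using (hy.comp x₀ ((hasDerivAt_id x₀).sub_const y)).const_mul (u y)

/-- When `p` vanishes to order `n` at `a` and `b`, this is the `k`-th weak derivative of
`(Icc a b).indicator p.eval` for `k ≤ n`. -/
noncomputable def truncDeriv (p : ℝ[X]) (a b : ℝ) (k : ℕ) : ℝ → ℝ :=
  (Icc a b).indicator fun x => (derivative^[k] p).eval x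

section truncDeriv

variable {p : ℝ[X]} {a b : ℝ} {n k : ℕ}

theorem integrable_truncDeriv (p : ℝ[X]) (a b : ℝ) (k : ℕ) : Integrable (truncDeriv p a b k) :=
  (derivative^[k] p).continuous.integrableOn_Icc.integrable_indicator measurableSet_Icc

theorem exists_bound_truncDeriv (p : ℝ[X]) (a b : ℝ) (k : ℕ) :
    ∃ C, ∀ x, ‖truncDeriv p a b k x‖ ≤ C := by
  obtain ⟨C, hC⟩ := (isCompact_Icc (a := a) (b := b)).exists_bound_of_continuousOn
    (derivative^[k] p).continuous.continuousOn
  refine ⟨max C 0, fun x => ?_⟩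
  by_cases hx : x ∈ Icc a b
  · simpa [truncDeriv, hx] using (hC x hx).trans (le_max_left C 0)
  · simp [truncDeriv, hx]

theorem exists_lipschitzWith_truncDeriv (hab : a ≤ b) (ha : (X - C a) ^ n ∣ p)
    (hb : (X - C b) ^ n ∣ p) (hk : k < n) : ∃ K, LipschitzWith K (truncDeriv p a b k) := by
  have hsmooth : ContDiff ℝ 1 fun x => (derivative^[k] p).eval x := by
    simpa using (derivative^[k] p).contDiff_aeval (𝕜 := ℝ) 1
  obtain ⟨K, hK⟩ := hsmooth.contDiffOn.exists_lipschitzOnWith one_ne_zero (convex_Icc a b)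
    isCompact_Icc
  exact ⟨K, lipschitzWith_indicator_Icc hab hK
    (eval_iterate_derivative_eq_zero_of_pow_dvd ha hk)
    (eval_iterate_derivative_eq_zero_of_pow_dvd hb hk)⟩

theorem ae_hasDerivAt_truncDeriv (p : ℝ[X]) (a b : ℝ) (k : ℕ) :
    ∀ᵐ x, HasDerivAt (truncDeriv p a b k) (truncDeriv p a b (k + 1) x) x := by
  filter_upwards [(toFinite {a, b}).countable.ae_notMem volume] with x hx
  simp only [mem_insert_iff, mem_singleton_iff, not_or] at hx
  refine hasDerivAt_indicator_Icc (fun y => ?_) hx.1 hx.2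
  simpa only [Function.iterate_succ_apply'] using (derivative^[k] p).hasDerivAt y

theorem deriv_convolution_truncDeriv {u : ℝ → ℝ} (hu : Integrable u) (hab : a ≤ b)
    (ha : (X - C a) ^ n ∣ p) (hb : (X - C b) ^ n ∣ p) (hk : k < n) :
    deriv (u ⋆[mul ℝ ℝ] truncDeriv p a b k) = u ⋆[mul ℝ ℝ] truncDeriv p a b (k + 1) := by
  obtain ⟨K, hK⟩ := exists_lipschitzWith_truncDeriv hab ha hb hk
  obtain ⟨M, hM⟩ := exists_bound_truncDeriv p a b k
  funext x
  exact (hasDerivAt_convolution_of_lipschitzWith hu hK hM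
    (integrable_truncDeriv p a b (k + 1)).1 (ae_hasDerivAt_truncDeriv p a b k) x).deriv

theorem iterate_deriv_convolution_truncDeriv {u : ℝ → ℝ} (hu : Integrable u) (hab : a ≤ b)
    (ha : (X - C a) ^ n ∣ p) (hb : (X - C b) ^ n ∣ p) {m : ℕ} (hm : m ≤ n) :
    deriv^[m] (u ⋆[mul ℝ ℝ] truncDeriv p a b 0) = u ⋆[mul ℝ ℝ] truncDeriv p a b m := by
  induction m with
  | zero => rfl
  | succ m ih =>
    rw [Function.iterate_succ_apply', ih (by omega),
      deriv_convolution_truncDeriv hu hab ha hb (by omega)]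

theorem iteratedDeriv_two_mul_truncDeriv_convolution_self (hab : a ≤ b)
    (ha : (X - C a) ^ n ∣ p) (hb : (X - C b) ^ n ∣ p) :
    iteratedDeriv (2 * n) (truncDeriv p a b 0 ⋆[mul ℝ ℝ] truncDeriv p a b 0) =
      truncDeriv p a b n ⋆[mul ℝ ℝ] truncDeriv p a b n := by
  rw [iteratedDeriv_eq_iterate, two_mul, Function.iterate_add_apply,
    iterate_deriv_convolution_truncDeriv (integrable_truncDeriv p a b 0) hab ha hb le_rfl,
    ← convolution_flip, ContinuousLinearMap.flip_mul,
    iterate_deriv_convolution_truncDeriv (integrable_truncDeriv p a b n) hab ha hb le_rfl]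

variable {c : ℝ}

theorem truncDeriv_neg (hp : p.comp (-X) = p) (k : ℕ) (x : ℝ) :
    truncDeriv p (-c) c k (-x) = (-1) ^ k * truncDeriv p (-c) c k x := by
  have hmem : -x ∈ Icc (-c) c ↔ x ∈ Icc (-c) c := by
    simp only [mem_Icc, neg_le_neg_iff, neg_le]
    tauto
  by_cases hx : x ∈ Icc (-c) c
  · simp [truncDeriv, hx, hmem.2 hx, eval_neg_iterate_derivative_of_comp_neg_X hp]
  · simp [truncDeriv, hx, mt hmem.1 hx]

theorem truncDeriv_convolution_apply_zero (hp : p.comp (-X) = p) (hc : 0 ≤ c) (j k : ℕ) :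
    (truncDeriv p (-c) c j ⋆[mul ℝ ℝ] truncDeriv p (-c) c k) 0 =
      (-1) ^ k * ∫ x in -c..c, (derivative^[j] p).eval x * (derivative^[k] p).eval x := by
  rw [convolution_mul, intervalIntegral.integral_of_le (by linarith),
    ← integral_Icc_eq_integral_Ioc, ← integral_indicator measurableSet_Icc,
    ← integral_const_mul]
  congr 1
  ext x
  rw [zero_sub, truncDeriv_neg hp]
  by_cases hx : x ∈ Icc (-c) c <;> simp [truncDeriv, hx]
  ring

theorem iteratedDeriv_two_mul_truncDeriv_convolution_self_apply_zero
    (hp : p.comp (-X) = p) (hc : 0 ≤ c) (ha : (X - C (-c)) ^ n ∣ p) (hb : (X - C c) ^ n ∣ p) :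
    iteratedDeriv (2 * n) (truncDeriv p (-c) c 0 ⋆[mul ℝ ℝ] truncDeriv p (-c) c 0) 0 =
      ∫ x in -c..c, p.eval x * (derivative^[2 * n] p).eval x := by
  rw [iteratedDeriv_two_mul_truncDeriv_convolution_self (by linarith) ha hb,
    truncDeriv_convolution_apply_zero hp hc, integral_eval_iterate_derivative_mul ha hb,
    ← Function.iterate_add_apply, ← two_mul, ← mul_assoc, ← mul_pow]
  simp

end truncDeriv

/-- `(1 - (2x/h)²)^r`, factored so that its roots `±h/2` and its leading coefficient are visible. -/
noncomputable def bumpPoly (h : ℝ) (r : ℕ) : ℝ[X] :=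
  C ((-4 / h ^ 2) ^ r) * ((X - C (-(h / 2))) * (X - C (h / 2))) ^ r

section bumpPoly

variable {h : ℝ} {r : ℕ}

theorem eval_bumpPoly (hh : h ≠ 0) (x : ℝ) :
    (bumpPoly h r).eval x = (1 - (2 * x / h) ^ 2) ^ r := by
  simp only [bumpPoly, eval_mul, eval_pow, eval_C, eval_sub, eval_X, ← mul_pow]
  congr 1
  field_simp
  ring

theorem bumpPoly_comp_neg_X : (bumpPoly h r).comp (-X) = bumpPoly h r := by
  simp only [bumpPoly, mul_comp, pow_comp, C_comp, sub_comp, X_comp, C_neg, neg_comp]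
  ring

theorem pow_dvd_bumpPoly_left : (X - C (-(h / 2))) ^ r ∣ bumpPoly h r :=
  dvd_mul_of_dvd_right (pow_dvd_pow_of_dvd (dvd_mul_right _ _) r) _

theorem pow_dvd_bumpPoly_right : (X - C (h / 2)) ^ r ∣ bumpPoly h r :=
  dvd_mul_of_dvd_right (pow_dvd_pow_of_dvd (dvd_mul_left _ _) r) _

theorem iterate_derivative_two_mul_bumpPoly :
    derivative^[2 * r] (bumpPoly h r) = C ((-4 / h ^ 2) ^ r * (2 * r).factorial) := by
  have hmonic : (((X - C (-(h / 2))) * (X - C (h / 2))) ^ r).Monic :=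
    ((monic_X_sub_C _).mul (monic_X_sub_C _)).pow r
  have hdeg : (((X - C (-(h / 2))) * (X - C (h / 2))) ^ r).natDegree = 2 * r := by
    rw [natDegree_pow, natDegree_mul (X_sub_C_ne_zero _) (X_sub_C_ne_zero _),
      natDegree_X_sub_C, natDegree_X_sub_C, mul_comm]
  rw [bumpPoly, iterate_derivative_C_mul, ← hdeg, hmonic.iterate_derivative_natDegree, C_mul]

theorem integral_one_sub_two_mul_div_sq_pow (hh : h ≠ 0) (n : ℕ) :
    ∫ x in -(h / 2)..h / 2, (1 - (2 * x / h) ^ 2) ^ n =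
      h / 2 * ∫ x in (-1 : ℝ)..1, (1 - x ^ 2) ^ n := by
  have hc : h / 2 ≠ 0 := by positivity
  have := intervalIntegral.integral_comp_div (fun x => (1 - x ^ 2) ^ n) hc
    (a := -(h / 2)) (b := h / 2)
  rw [neg_div, div_self hc] at this
  rw [← smul_eq_mul, ← this]
  congr 1
  ext x
  congr 3
  field_simp

theorem truncDeriv_bumpPoly_zero_apply (hh : h ≠ 0) (hr : r ≠ 0) (x : ℝ) :
    truncDeriv (bumpPoly h r) (-(h / 2)) (h / 2) 0 x =
      if |x| < h / 2 then (1 - (2 * x / h) ^ 2) ^ r else 0 := by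
  rw [truncDeriv, Function.iterate_zero_apply]
  rcases lt_trichotomy |x| (h / 2) with hx | hx | hx
  · rw [if_pos hx, indicator_of_mem (mem_Icc.2 (abs_le.mp hx.le)), eval_bumpPoly hh]
  · have hsq : (2 * x / h) ^ 2 = 1 := by
      rw [div_pow, mul_pow, ← sq_abs x, hx]
      field_simp
    rw [if_neg hx.not_lt, indicator_of_mem (mem_Icc.2 (abs_le.mp hx.le)), eval_bumpPoly hh,
      hsq, sub_self, zero_pow hr]
  · rw [if_neg hx.not_gt, indicator_of_notMem (s := Icc (-(h / 2)) (h / 2))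
      (fun hmem => hx.not_ge (abs_le.mpr hmem))]

theorem bump_convolution_self_apply_zero (hh : 0 < h) (r : ℕ) :
    (truncDeriv (bumpPoly h r) (-(h / 2)) (h / 2) 0 ⋆[mul ℝ ℝ]
        truncDeriv (bumpPoly h r) (-(h / 2)) (h / 2) 0) 0 =
      h * √π * (2 * r).factorial / (2 * Gamma (2 * r + 3 / 2)) := by
  rw [truncDeriv_convolution_apply_zero bumpPoly_comp_neg_X (by positivity)]
  simp only [Function.iterate_zero_apply, pow_zero, one_mul, eval_bumpPoly hh.ne', ← pow_add,
    ← two_mul]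
  rw [integral_one_sub_two_mul_div_sq_pow hh.ne', integral_one_sub_sq_pow_eq_Gamma]
  push_cast
  ring

theorem iteratedDeriv_bump_convolution_self_apply_zero (hh : 0 < h) (hr : r ≠ 0) :
    (-1) ^ r * iteratedDeriv (2 * r) (truncDeriv (bumpPoly h r) (-(h / 2)) (h / 2) 0 ⋆[mul ℝ ℝ]
        truncDeriv (bumpPoly h r) (-(h / 2)) (h / 2) 0) 0 =
      4 ^ (2 * r) * (r.factorial : ℝ) ^ 2 / ((2 * r + 1) * h ^ (2 * r - 1)) := by
  rw [iteratedDeriv_two_mul_truncDeriv_convolution_self_apply_zero bumpPoly_comp_neg_X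
    (by positivity) pow_dvd_bumpPoly_left pow_dvd_bumpPoly_right,
    iterate_derivative_two_mul_bumpPoly]
  simp only [eval_C, eval_bumpPoly hh.ne']
  rw [intervalIntegral.integral_mul_const, integral_one_sub_two_mul_div_sq_pow hh.ne',
    integral_one_sub_sq_pow]
  have hsign : (-1 : ℝ) ^ r * (-4 / h ^ 2) ^ r = 4 ^ r / (h ^ (2 * r - 1) * h) := by
    rw [← mul_pow, ← pow_succ, Nat.sub_add_cancel (by omega), pow_mul, ← div_pow]
    ring
  have h2 : (2 : ℝ) ^ (2 * r + 1) = 2 * 4 ^ r := by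
    rw [pow_succ, pow_mul]
    ring
  rw [show ∀ I F : ℝ, (-1) ^ r * (h / 2 * I * ((-4 / h ^ 2) ^ r * F)) =
    h / 2 * I * F * ((-1) ^ r * (-4 / h ^ 2) ^ r) from fun _ _ => by ring,
    hsign, h2, Nat.factorial_succ, two_mul r, pow_add]
  push_cast
  field_simp
  ring

end bumpPoly

theorem psi_at_zero_general (d r : ℕ) (hr : 1 ≤ r) (b h : ℝ) (hh : 0 < h)
    (φ : ℝ → ℝ)
    (hφ : ∀ x : ℝ, φ x = if |x| < h / 2 then (1 - (2 * x / h) ^ 2) ^ r else 0)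
    (g : ℝ → ℝ) (hg : ∀ x : ℝ, g x = ∫ y : ℝ, φ y * φ (x - y)) :
    (2 * π * b) ^ (2 * r) * g 0 ^ d -
        (-1 : ℝ) ^ r * d * iteratedDeriv (2 * r) g 0 * g 0 ^ (d - 1) =
      (h * Real.sqrt π * (Nat.factorial (2 * r)) /
          (2 * Real.Gamma (2 * r + 3 / 2))) ^ d * (2 * π * b) ^ (2 * r) -
        (h * Real.sqrt π * (Nat.factorial (2 * r)) /
          (2 * Real.Gamma (2 * r + 3 / 2))) ^ (d - 1) *
          (d * 4 ^ (2 * r) * (Nat.factorial r) ^ 2 / ((2 * r + 1) * h ^ (2 * r - 1))) := by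
  have hφ_eq : φ = truncDeriv (bumpPoly h r) (-(h / 2)) (h / 2) 0 := by
    ext x
    rw [hφ, truncDeriv_bumpPoly_zero_apply hh.ne' (by omega)]
  have hg_eq : g = φ ⋆[mul ℝ ℝ] φ := funext hg
  have hg0 := bump_convolution_self_apply_zero hh r
  have hgd := iteratedDeriv_bump_convolution_self_apply_zero hh (r := r) (by omega)
  rw [← hφ_eq, ← hg_eq] at hg0 hgd
  rw [hg0]
  linear_combination
    (-(d : ℝ) * (h * √π * (2 * r).factorial / (2 * Gamma (2 * r + 3 / 2))) ^ (d - 1)) * hgd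

theorem psi_at_zero (d r : ℕ) (hd : 1 ≤ d) (hr : 1 ≤ r) (b h : ℝ) (hb : 0 < b) (hh : 0 < h)
    (φ : ℝ → ℝ)
    (hφ : ∀ x : ℝ, φ x = if |x| < h / 2 then (1 - (2 * x / h) ^ 2) ^ r else 0)
    (g : ℝ → ℝ) (hg : ∀ x : ℝ, g x = ∫ y : ℝ, φ y * φ (x - y)) :
    (2 * π * b) ^ (2 * r) * g 0 ^ d -
        (-1 : ℝ) ^ r * d * iteratedDeriv (2 * r) g 0 * g 0 ^ (d - 1) =
      (h * Real.sqrt π * (Nat.factorial (2 * r)) /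
          (2 * Real.Gamma (2 * r + 3 / 2))) ^ d * (2 * π * b) ^ (2 * r) -
        (h * Real.sqrt π * (Nat.factorial (2 * r)) /
          (2 * Real.Gamma (2 * r + 3 / 2))) ^ (d - 1) *
          (d * 4 ^ (2 * r) * (Nat.factorial r) ^ 2 / ((2 * r + 1) * h ^ (2 * r - 1))) :=
  psi_at_zero_general d r hr b h hh φ hφ g hg
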